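/- Let n ≥ 0 be an integer and let h ∈ K_∞⟨t⟩ with ‖h‖ < 1. Then the series s_h := h + ∑_{i=1}^∞ h^{(i)} · ∏_{j=0}^{i−1} (t−θ^{q^j})^{−n} converges in K_∞⟨t⟩, and s_h satisfies s_h − (t−θ)^{−n} s_h^{(1)} = h. -/

import Mathlib

open scoped Classical ENNReal
open Filter

noncomputable section

namespace Carlitz

variable (F : Type) [Field F] [Fintype F]

/-- `K∞ = 𝔽((1/θ))`, realized as the field of formal Laurent series over `F`;
the Laurent-series variable plays the role of `1/θ`. -/
abbrev Kinf := LaurentSeries F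

/-- `θ ∈ K∞`, the inverse of the Laurent-series variable. -/
def theta : Kinf F := HahnSeries.single (-1 : ℤ) (1 : F)

/-- The absolute value `|x| = q ^ (deg_θ x)`, with values in `ℝ≥0∞`. -/
def Kabs {R : Type} [Zero R] (q : ℕ) (x : HahnSeries ℤ R) : ℝ≥0∞ :=
  if x = 0 then 0 else (q : ℝ≥0∞) ^ (-x.order)

/-- The ambient ring of the Tate algebra: formal power series in `t` over `K∞`. -/
abbrev TS := PowerSeries (Kinf F)

/-- The `i`-th `t`-coefficient. -/
def coeffT (i : ℕ) (f : TS F) : Kinf F := PowerSeries.coeff i f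

/-- Membership in the Tate algebra `K∞⟨t⟩`: the coefficients tend to `0`. -/
def IsTate (f : TS F) : Prop :=
  Tendsto (fun i => Kabs (Fintype.card F) (coeffT F i f)) atTop (nhds 0)

/-- The Gauss norm `‖f‖ = sup_i |a_i|`. -/
def gnorm (f : TS F) : ℝ≥0∞ := ⨆ i, Kabs (Fintype.card F) (coeffT F i f)

/-- The twist `f ↦ f⁽¹⁾`: the coefficientwise `q`-power Frobenius. -/
def twist (f : TS F) : TS F := PowerSeries.mk fun i => coeffT F i f ^ Fintype.card F

/-- The iterated twist `f ↦ f⁽ᵏ⁾`. -/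
def twistIter (k : ℕ) (f : TS F) : TS F := (twist F)^[k] f

/-- The variable `t` of the Tate algebra. -/
def tt : TS F := PowerSeries.X

/-- `θ`, viewed as a constant of `K∞⟨t⟩`. -/
def th : TS F := PowerSeries.C (R := Kinf F) (theta F)

/-- The embedding `𝔽[θ] → K∞` sending the polynomial variable to `θ`. -/
def polyK : Polynomial F →+* Kinf F :=
  Polynomial.eval₂RingHom (HahnSeries.C : F →+* Kinf F) (theta F)

/-- The embedding `𝔽[θ][t] → K∞⟨t⟩`: the outer variable goes to `t`,
the inner variable goes to `θ`. -/
def polyT : Polynomial (Polynomial F) →+* TS F :=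
  Polynomial.eval₂RingHom ((PowerSeries.C (R := Kinf F)).comp (polyK F)) PowerSeries.X

/-- The subring `𝔽[θ,t] ⊆ K∞⟨t⟩`. -/
def PolyTT : Set (TS F) := Set.range (polyT F)

/-- The subset of `𝔽[θ,t]` of elements of `θ`-degree `< n`. -/
def PolyDegLt (n : ℕ) : Set (TS F) :=
  {f | ∃ P : Polynomial (Polynomial F), (∀ i, (P.coeff i).degree < (n : ℕ)) ∧ f = polyT F P}

/-- The action of `𝔽[t]` on `K∞⟨t⟩`: `a • f` is `actT a * f`. -/
def actT : Polynomial F →+* TS F :=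
  Polynomial.eval₂RingHom ((PowerSeries.C (R := Kinf F)).comp (HahnSeries.C : F →+* Kinf F))
    PowerSeries.X

/-- Convergence in `K∞⟨t⟩` with respect to the Gauss norm:
`L` is the limit of the sequence `s`. -/
def TT (s : ℕ → TS F) (L : TS F) : Prop :=
  Tendsto (fun N => gnorm F (L - s N)) atTop (nhds 0)

/-- Convergence in `K∞`: `L` is the limit of the sequence `s`. -/
def KT (q : ℕ) (s : ℕ → Kinf F) (L : Kinf F) : Prop :=
  Tendsto (fun N => Kabs q (L - s N)) atTop (nhds 0)

/-- Partial products defining `ν_n = (−θ)^{−h} ∏_{j≥0} (1 − t·θ^{−qʲ})ⁿ`,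
where `n = h(q−1) + δ`. -/
def nuPartial (n h N : ℕ) : TS F :=
  PowerSeries.C (R := Kinf F) ((-theta F)⁻¹ ^ h) *
    ∏ j ∈ Finset.range N,
      (1 - tt F * PowerSeries.C (R := Kinf F) ((theta F)⁻¹ ^ Fintype.card F ^ j)) ^ n

/-- Partial products defining `ω_n = (−θ)^m ∏_{i≥0} (1 − t·θ^{−qⁱ})^{−n}`,
where `n = m(q−1)`; `ω_n` is the `n`-th power of the Anderson–Thakur function. -/
def omegaPartial (n m N : ℕ) : TS F :=
  PowerSeries.C (R := Kinf F) ((-theta F) ^ m) *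
    ∏ i ∈ Finset.range N,
      ((1 - tt F * PowerSeries.C (R := Kinf F) ((theta F)⁻¹ ^ Fintype.card F ^ i)) ^ n)⁻¹

/-- Partial sums defining `ξ_e = ∑_{k≥0} e⁽ᵏ⁾ ∏_{i=0}^{k} (t−θ^{qⁱ})^{−n}`. -/
def xiPartial (n : ℕ) (e : TS F) (N : ℕ) : TS F :=
  ∑ k ∈ Finset.range N, twistIter F k e *
    (∏ i ∈ Finset.range (k + 1),
      (tt F - PowerSeries.C (R := Kinf F) (theta F ^ Fintype.card F ^ i)) ^ n)⁻¹

/-- Partial sums defining `s_h = h + ∑_{i≥1} h⁽ⁱ⁾ ∏_{j=0}^{i−1} (t−θ^{qʲ})^{−n}`. -/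
def sPartial (n : ℕ) (h : TS F) (N : ℕ) : TS F :=
  ∑ i ∈ Finset.range N, twistIter F i h *
    (∏ j ∈ Finset.range i,
      (tt F - PowerSeries.C (R := Kinf F) (theta F ^ Fintype.card F ^ j)) ^ n)⁻¹

/-- The map `β : f ↦ f − (t−θ)ⁿ f⁽¹⁾`. -/
def beta (n : ℕ) (f : TS F) : TS F := f - (tt F - th F) ^ n * twist F f

/-- The set of integral extension representatives
`X_n = {ξ ∈ K∞⟨t⟩ : (t−θ)ⁿ ξ − ξ⁽¹⁾ ∈ 𝔽[θ,t]}`. -/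
def Xset (n : ℕ) : Set (TS F) :=
  {ξ | IsTate F ξ ∧ (tt F - th F) ^ n * ξ - twist F ξ ∈ PolyTT F}

/-!
Since `‖h‖ < 1`, the twist `h⁽ⁱ⁾` has norm `≤ q ^ (-qⁱ)`, while `(t - c)⁻¹ = -∑ₖ c^{-(k+1)} tᵏ`
is a Tate series of norm `≤ 1` whenever `|c| > 1`. So the `i`-th term of `s_h` has norm
`≤ q ^ (-qⁱ)` and the partial sums are Cauchy for the Gauss norm. The limit is built
coefficientwise, since Laurent series agreeing in ever more degrees stabilise degree by degree,
and it is Tate because the Tate series of norm `≤ 1` form a subring that is closed for the Gauss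
norm. Twisting the `i`-th term and dividing by `(t - θ)ⁿ` gives the `(i+1)`-st one, so
`s_N - (t - θ)⁻ⁿ s_N⁽¹⁾ = h - (N-th term)` telescopes, and the functional equation follows as
`N → ∞`.
-/

open PowerSeries

section GaussBall

variable {K : Type*} [Field K]

/-- `f ∈ gaussBall m` means `‖f‖ ≤ q ^ (-m)` for the Gauss norm. -/
def gaussBall (m : ℤ) : AddSubgroup (PowerSeries (LaurentSeries K)) where
  carrier := {f | ∀ k, (m : WithTop ℤ) ≤ HahnSeries.addVal ℤ K (coeff k f)}
  zero_mem' := by simp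
  add_mem' hf hg k := by rw [map_add]; exact AddValuation.map_le_add _ (hf k) (hg k)
  neg_mem' hf k := by rw [map_neg, AddValuation.map_neg]; exact hf k

lemma mem_gaussBall {m : ℤ} {f : PowerSeries (LaurentSeries K)} :
    f ∈ gaussBall m ↔ ∀ k, (m : WithTop ℤ) ≤ HahnSeries.addVal ℤ K (coeff k f) := Iff.rfl

lemma gaussBall_anti {m m' : ℤ} (h : m' ≤ m) : gaussBall (K := K) m ≤ gaussBall m' :=
  fun _ hf k => (WithTop.coe_le_coe.mpr h).trans (hf k)

lemma mul_mem_gaussBall {m m' : ℤ} {f g : PowerSeries (LaurentSeries K)} (hf : f ∈ gaussBall m)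
    (hg : g ∈ gaussBall m') : f * g ∈ gaussBall (m + m') := fun k => by
  rw [coeff_mul]
  refine AddValuation.map_le_sum _ fun p _ => ?_
  rw [AddValuation.map_mul, WithTop.coe_add]
  exact add_le_add (hf p.1) (hg p.2)

lemma le_addVal_pow {x : LaurentSeries K} {m : ℤ}
    (hx : (m : WithTop ℤ) ≤ HahnSeries.addVal ℤ K x) (e : ℕ) :
    ((e * m : ℤ) : WithTop ℤ) ≤ HahnSeries.addVal ℤ K (x ^ e) := by
  rw [AddValuation.map_pow, ← nsmul_eq_mul, WithTop.coe_nsmul]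
  exact nsmul_le_nsmul_right hx e

lemma eq_zero_of_forall_mem_gaussBall {f : PowerSeries (LaurentSeries K)}
    (hf : ∀ N : ℕ, f ∈ gaussBall N) : f = 0 := by
  ext k g
  refine HahnSeries.coeff_eq_zero_of_lt_orderTop (lt_of_lt_of_le ?_ (hf (g.toNat + 1) k))
  exact WithTop.coe_lt_coe.mpr (by omega)

lemma _root_.HahnSeries.exists_le_orderTop_sub {R : Type*} [AddCommGroup R]
    (x : ℕ → HahnSeries ℤ R) (hx : ∀ N M : ℕ, N ≤ M → (N : WithTop ℤ) ≤ (x M - x N).orderTop) :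
    ∃ L : HahnSeries ℤ R, ∀ N : ℕ, (N : WithTop ℤ) ≤ (L - x N).orderTop := by
  have stable : ∀ (N M : ℕ) (g : ℤ), g < N → g < M → (x M).coeff g = (x N).coeff g := by
    intro N M g hN hM
    wlog hNM : N ≤ M generalizing N M
    · exact (this M N hM hN (by omega)).symm
    rw [← sub_eq_zero, ← HahnSeries.coeff_sub]
    exact HahnSeries.le_orderTop_iff_forall.mp (hx N M hNM) g (by exact_mod_cast hN)
  -- in degree `g` the sequence has stabilised from index `g.toNat + 1` on
  refine ⟨⟨fun g => (x (g.toNat + 1)).coeff g, ?_⟩, fun N => ?_⟩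
  · refine ((x 1).isPWO_support.union (BddBelow.isWF ⟨0, fun g hg => hg⟩).isPWO).mono ?_
    intro g hg
    by_cases h0 : 0 ≤ g
    · exact Or.inr h0
    · exact Or.inl (by simpa [show g.toNat = 0 by omega] using hg)
  · refine HahnSeries.le_orderTop_iff_forall.mpr fun g hg => ?_
    have hg : g < N := by exact_mod_cast hg
    rw [HahnSeries.coeff_sub, sub_eq_zero]
    exact stable N _ g hg (by omega)

lemma exists_sub_mem_gaussBall_of_cauchy {f : ℕ → PowerSeries (LaurentSeries K)}
    (hf : ∀ N M : ℕ, N ≤ M → f M - f N ∈ gaussBall N) : ∃ s, ∀ N : ℕ, s - f N ∈ gaussBall N := by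
  choose L hL using fun k => HahnSeries.exists_le_orderTop_sub (fun N => coeff k (f N))
    fun N M hNM => by simpa [HahnSeries.addVal_apply] using hf N M hNM k
  exact ⟨mk L, fun N k => by simpa [HahnSeries.addVal_apply] using hL k N⟩

end GaussBall

section PowerSeriesInv

variable {K : Type*} [Field K]

@[simps]
def _root_.PowerSeries.invMonoidHom (K : Type*) [Field K] : K⟦X⟧ →* K⟦X⟧ where
  toFun := Inv.inv
  map_one' := inv_one
  map_mul' f g := by rw [PowerSeries.mul_inv_rev, mul_comm]

lemma _root_.PowerSeries.map_inv {L : Type*} [Field L] (φ : K →+* L) (f : K⟦X⟧) :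
    PowerSeries.map φ f⁻¹ = (PowerSeries.map φ f)⁻¹ := by
  by_cases hf : constantCoeff f = 0
  · rw [PowerSeries.inv_eq_zero.mpr hf, map_zero, eq_comm, PowerSeries.inv_eq_zero,
      ← coeff_zero_eq_constantCoeff_apply, coeff_map, coeff_zero_eq_constantCoeff_apply, hf,
      map_zero]
  · symm
    rw [PowerSeries.inv_eq_iff_mul_eq_one, ← map_mul, PowerSeries.inv_mul_cancel _ hf, map_one]
    rwa [← coeff_zero_eq_constantCoeff_apply, coeff_map, coeff_zero_eq_constantCoeff_apply,
      map_ne_zero]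

lemma _root_.PowerSeries.coeff_inv_X_sub_C (a : K) (k : ℕ) :
    coeff k (X - C a)⁻¹ = -a⁻¹ ^ (k + 1) := by
  rcases eq_or_ne a 0 with rfl | ha
  · simp
  have hinv : (X - C a)⁻¹ = -invUnitsSub (Units.mk0 a ha) := by
    rw [PowerSeries.inv_eq_iff_mul_eq_one (by simpa using ha), neg_mul, ← mul_neg, neg_sub]
    exact invUnitsSub_mul_sub _
  simp [hinv, coeff_invUnitsSub]

end PowerSeriesInv

lemma one_le_addVal_inv_theta_pow {K : Type} [Field K] {c : ℕ} (hc : c ≠ 0) :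
    (1 : WithTop ℤ) ≤ HahnSeries.addVal ℤ K (theta K ^ c)⁻¹ := by
  have hθ : HahnSeries.addVal ℤ K (theta K)⁻¹ = ((1 : ℤ) : WithTop ℤ) := by
    rw [AddValuation.map_inv, HahnSeries.addVal_apply, theta,
      HahnSeries.orderTop_single one_ne_zero]
    rfl
  rw [← inv_pow]
  refine le_trans ?_ (le_addVal_pow hθ.ge c)
  exact_mod_cast (by omega : 1 ≤ c * 1)

lemma _root_.ENNReal.tendsto_nhds_zero_iff_forall_le_zpow {α : Type*} {l : Filter α}
    {u : α → ℝ≥0∞} {b : ℝ≥0∞} (hb : 1 < b) (hb' : b ≠ ⊤) :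
    Tendsto u l (nhds 0) ↔ ∀ m : ℕ, ∀ᶠ a in l, u a ≤ b ^ (-(m : ℤ)) := by
  rw [ENNReal.tendsto_nhds_zero]
  refine ⟨fun h m => h _ (ENNReal.zpow_pos (by positivity) hb' _), fun h ε hε => ?_⟩
  have hpow : Tendsto (fun m : ℕ => b ^ (-(m : ℤ))) atTop (nhds 0) := by
    simpa [← ENNReal.inv_zpow'] using
      ENNReal.tendsto_pow_atTop_nhds_zero_of_lt_one (ENNReal.inv_lt_one.mpr hb)
  obtain ⟨m, hm⟩ := (hpow.eventually (eventually_le_nhds hε)).exists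
  exact (h m).mono fun a ha => ha.trans hm

section Norms

variable {F}

lemma one_lt_card_nnreal : (1 : NNReal) < Fintype.card F := by exact_mod_cast Fintype.one_lt_card

lemma tendsto_nhds_zero_iff_forall_le_card_zpow {α : Type*} {l : Filter α} {u : α → ℝ≥0∞} :
    Tendsto u l (nhds 0) ↔ ∀ m : ℕ, ∀ᶠ a in l, u a ≤ (Fintype.card F : ℝ≥0∞) ^ (-(m : ℤ)) :=
  ENNReal.tendsto_nhds_zero_iff_forall_le_zpow (by exact_mod_cast Fintype.one_lt_card)
    (ENNReal.natCast_ne_top _)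

lemma Kabs_le_zpow_iff (x : Kinf F) (m : ℤ) :
    Kabs (Fintype.card F) x ≤ (Fintype.card F : ℝ≥0∞) ^ (-m) ↔
      (m : WithTop ℤ) ≤ HahnSeries.addVal ℤ F x := by
  have hq0 : (Fintype.card F : NNReal) ≠ 0 := by positivity
  unfold Kabs
  split_ifs with hx
  · simp [hx]
  · rw [HahnSeries.addVal_apply_of_ne hx, WithTop.coe_le_coe, ← ENNReal.coe_natCast,
      ← ENNReal.coe_zpow hq0, ← ENNReal.coe_zpow hq0, ENNReal.coe_le_coe,
      zpow_le_zpow_iff_right₀ one_lt_card_nnreal, neg_le_neg_iff]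

lemma one_le_addVal_of_Kabs_lt_one {x : Kinf F} (hx : Kabs (Fintype.card F) x < 1) :
    (1 : WithTop ℤ) ≤ HahnSeries.addVal ℤ F x := by
  have hq0 : (Fintype.card F : NNReal) ≠ 0 := by positivity
  unfold Kabs at hx
  split_ifs at hx with h0
  · simp [h0]
  · rw [← ENNReal.coe_natCast, ← ENNReal.coe_zpow hq0, ← ENNReal.coe_one, ENNReal.coe_lt_coe,
      zpow_lt_one_iff_right₀ one_lt_card_nnreal] at hx
    rw [HahnSeries.addVal_apply_of_ne h0]
    exact_mod_cast (by omega : 1 ≤ x.order)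

lemma gnorm_le_zpow_iff {f : TS F} {m : ℤ} :
    gnorm F f ≤ (Fintype.card F : ℝ≥0∞) ^ (-m) ↔ f ∈ gaussBall m := by
  simp only [gnorm, iSup_le_iff, coeffT, Kabs_le_zpow_iff, mem_gaussBall]

lemma mem_gaussBall_one_of_gnorm_lt_one {f : TS F} (hf : gnorm F f < 1) : f ∈ gaussBall 1 :=
  fun k => one_le_addVal_of_Kabs_lt_one ((le_iSup _ k).trans_lt hf)

lemma TT_iff {s : ℕ → TS F} {L : TS F} :
    TT F s L ↔ ∀ m : ℕ, ∀ᶠ N in atTop, L - s N ∈ gaussBall m := by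
  simp only [TT, tendsto_nhds_zero_iff_forall_le_card_zpow (F := F), gnorm_le_zpow_iff]

lemma isTate_iff {f : TS F} :
    IsTate F f ↔
      ∀ m : ℕ, ∀ᶠ k in atTop, ((m : ℤ) : WithTop ℤ) ≤ HahnSeries.addVal ℤ F (coeff k f) := by
  simp only [IsTate, coeffT, tendsto_nhds_zero_iff_forall_le_card_zpow (F := F), Kabs_le_zpow_iff]

end Norms

section TateIntegers

variable {F}

lemma IsTate.add {f g : TS F} (hf : IsTate F f) (hg : IsTate F g) : IsTate F (f + g) := by
  rw [isTate_iff] at *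
  intro m
  filter_upwards [hf m, hg m] with k hfk hgk
  rw [map_add]
  exact AddValuation.map_le_add _ hfk hgk

lemma IsTate.neg {f : TS F} (hf : IsTate F f) : IsTate F (-f) := by
  simpa only [isTate_iff, map_neg, AddValuation.map_neg] using hf

lemma isTate_one : IsTate F 1 :=
  isTate_iff.mpr fun _ => (eventually_ne_atTop 0).mono fun k hk => by simp [coeff_one, hk]

lemma IsTate.mul {f g : TS F} (hf : IsTate F f) (hg : IsTate F g) (hf0 : f ∈ gaussBall 0)
    (hg0 : g ∈ gaussBall 0) : IsTate F (f * g) := by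
  rw [isTate_iff] at *
  intro m
  obtain ⟨A, hA⟩ := eventually_atTop.mp (hf m)
  obtain ⟨B, hB⟩ := eventually_atTop.mp (hg m)
  refine eventually_atTop.mpr ⟨A + B, fun k hk => ?_⟩
  rw [coeff_mul]
  refine AddValuation.map_le_sum _ fun p hp => ?_
  have hpk := Finset.HasAntidiagonal.mem_antidiagonal.mp hp
  rw [AddValuation.map_mul]
  rcases le_or_gt A p.1 with h1 | h1
  · simpa using add_le_add (hA p.1 h1) (hg0 p.2)
  · simpa using add_le_add (hf0 p.1) (hB p.2 (by omega))

def tateIntegers : Subring (TS F) where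
  carrier := {f | IsTate F f ∧ f ∈ gaussBall 0}
  zero_mem' := ⟨isTate_iff.mpr fun _ => by simp, zero_mem _⟩
  one_mem' := ⟨isTate_one, fun k => by rw [coeff_one]; split_ifs <;> simp⟩
  add_mem' hf hg := ⟨hf.1.add hg.1, add_mem hf.2 hg.2⟩
  neg_mem' hf := ⟨hf.1.neg, neg_mem hf.2⟩
  mul_mem' hf hg := ⟨hf.1.mul hg.1 hf.2 hg.2, by simpa using mul_mem_gaussBall hf.2 hg.2⟩

lemma isTate_of_forall_exists_sub_mem_gaussBall {f : TS F}
    (hf : ∀ m : ℕ, ∃ g, IsTate F g ∧ f - g ∈ gaussBall m) : IsTate F f := by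
  refine isTate_iff.mpr fun m => ?_
  obtain ⟨g, hg, hfg⟩ := hf m
  filter_upwards [isTate_iff.mp hg m] with k hk
  simpa using AddValuation.map_le_add _ (hfg k) hk

lemma inv_X_sub_C_mem_tateIntegers {a : Kinf F}
    (ha : (1 : WithTop ℤ) ≤ HahnSeries.addVal ℤ F a⁻¹) : (X - C a)⁻¹ ∈ tateIntegers := by
  have hcoeff : ∀ k : ℕ, (((k + 1 : ℕ) : ℤ) : WithTop ℤ) ≤
      HahnSeries.addVal ℤ F (coeff k (X - C a)⁻¹) := fun k => by
    simpa [PowerSeries.coeff_inv_X_sub_C] using le_addVal_pow ha (k + 1)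
  refine ⟨isTate_iff.mpr fun m => (eventually_ge_atTop m).mono fun k hk => ?_, fun k => ?_⟩
  · exact le_trans (by exact_mod_cast (by omega : m ≤ k + 1)) (hcoeff k)
  · exact le_trans (by exact_mod_cast (by omega : 0 ≤ k + 1)) (hcoeff k)

end TateIntegers

section Twist

variable {F}

lemma twist_eq_map (f : TS F) :
    twist F f = PowerSeries.map (FiniteField.frobeniusAlgHom F (Kinf F)).toRingHom f := by
  ext k
  simp [twist, coeffT]

lemma twist_mul (f g : TS F) : twist F (f * g) = twist F f * twist F g := by
  simp only [twist_eq_map, map_mul]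

lemma twist_sub (f g : TS F) : twist F (f - g) = twist F f - twist F g := by
  simp only [twist_eq_map, map_sub]

lemma twist_inv (f : TS F) : twist F f⁻¹ = (twist F f)⁻¹ := by
  rw [twist_eq_map, twist_eq_map, PowerSeries.map_inv]

lemma coeff_twist (k : ℕ) (f : TS F) : coeff k (twist F f) = coeff k f ^ Fintype.card F := by
  simp [twist, coeffT]

lemma twistIter_succ (i : ℕ) (f : TS F) : twistIter F (i + 1) f = twist F (twistIter F i f) :=
  Function.iterate_succ_apply' _ _ _

lemma twist_mem_gaussBall {f : TS F} {m : ℤ} (hf : f ∈ gaussBall m) :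
    twist F f ∈ gaussBall (Fintype.card F * m) := fun k => by
  rw [coeff_twist]
  exact le_addVal_pow (hf k) _

lemma twistIter_mem_gaussBall {f : TS F} {m : ℤ} (hf : f ∈ gaussBall m) (i : ℕ) :
    twistIter F i f ∈ gaussBall (Fintype.card F ^ i * m) := by
  induction i with
  | zero => simpa [twistIter] using hf
  | succ i ih =>
    rw [twistIter_succ, pow_succ', mul_assoc]
    exact_mod_cast twist_mem_gaussBall ih

lemma IsTate.twist {f : TS F} (hf : IsTate F f) : IsTate F (twist F f) := by
  rw [isTate_iff] at *
  refine fun m => (hf m).mono fun k hk => ?_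
  rw [coeff_twist]
  refine le_trans ?_ (le_addVal_pow hk _)
  exact_mod_cast le_mul_of_one_le_left (by positivity) (by exact_mod_cast Fintype.card_pos)

lemma twistIter_mem_tateIntegers {f : TS F} (hf : f ∈ tateIntegers) (i : ℕ) :
    twistIter F i f ∈ tateIntegers := by
  induction i with
  | zero => exact hf
  | succ i ih =>
    rw [twistIter_succ]
    exact ⟨ih.1.twist, by simpa using twist_mem_gaussBall ih.2⟩

end Twist

section Series

variable {F}

def sDenom (n i : ℕ) : TS F := ∏ j ∈ Finset.range i, (tt F - C (theta F ^ Fintype.card F ^ j)) ^ n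

def sTerm (n : ℕ) (h : TS F) (i : ℕ) : TS F := twistIter F i h * (sDenom n i)⁻¹

lemma sPartial_eq_sum (n : ℕ) (h : TS F) (N : ℕ) :
    sPartial F n h N = ∑ i ∈ Finset.range N, sTerm n h i := rfl

lemma inv_sDenom_mem_tateIntegers (n i : ℕ) : (sDenom (F := F) n i)⁻¹ ∈ tateIntegers := by
  rw [sDenom, ← PowerSeries.invMonoidHom_apply, map_prod]
  refine prod_mem fun j _ => ?_
  rw [map_pow]
  exact pow_mem (inv_X_sub_C_mem_tateIntegers
    (one_le_addVal_inv_theta_pow (pow_ne_zero _ Fintype.card_ne_zero))) n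

lemma sDenom_succ (n i : ℕ) :
    sDenom n (i + 1) = (tt F - th F) ^ n * twist F (sDenom n i) := by
  simp [sDenom, Finset.prod_range_succ', twist_eq_map, th, tt, ← pow_mul, ← pow_succ', mul_comm]

lemma sTerm_zero (n : ℕ) (h : TS F) : sTerm n h 0 = h := by
  simp [sTerm, sDenom, twistIter]

lemma sTerm_succ (n : ℕ) (h : TS F) (i : ℕ) :
    sTerm n h (i + 1) = ((tt F - th F) ^ n)⁻¹ * twist F (sTerm n h i) := by
  rw [sTerm, sTerm, sDenom_succ, twistIter_succ, twist_mul, twist_inv, PowerSeries.mul_inv_rev]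
  ring

lemma sPartial_sub_inv_mul_twist (n : ℕ) (h : TS F) (N : ℕ) :
    sPartial F n h N - ((tt F - th F) ^ n)⁻¹ * twist F (sPartial F n h N) = h - sTerm n h N := by
  rw [sPartial_eq_sum, twist_eq_map, map_sum, Finset.mul_sum, ← Finset.sum_sub_distrib]
  simp_rw [← twist_eq_map, ← sTerm_succ]
  rw [Finset.sum_range_sub', sTerm_zero]

lemma le_card_pow (i : ℕ) : (i : ℤ) ≤ Fintype.card F ^ i :=
  mod_cast (Nat.lt_pow_self Fintype.one_lt_card).le

variable {n : ℕ} {h : TS F}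

lemma sTerm_mem_gaussBall (hh : h ∈ gaussBall 1) (i : ℕ) :
    sTerm n h i ∈ gaussBall (Fintype.card F ^ i) := by
  simpa [sTerm] using
    mul_mem_gaussBall (twistIter_mem_gaussBall hh i) (inv_sDenom_mem_tateIntegers n i).2

lemma sPartial_mem_tateIntegers (hh : h ∈ tateIntegers) (N : ℕ) :
    sPartial F n h N ∈ tateIntegers :=
  sum_mem fun i _ => mul_mem (twistIter_mem_tateIntegers hh i) (inv_sDenom_mem_tateIntegers n i)

lemma sPartial_sub_sPartial_mem_gaussBall (hh : h ∈ gaussBall 1) {N M : ℕ} (hNM : N ≤ M) :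
    sPartial F n h M - sPartial F n h N ∈ gaussBall N := by
  rw [sPartial_eq_sum, sPartial_eq_sum, ← Finset.sum_Ico_eq_sub _ hNM]
  refine sum_mem fun i hi => gaussBall_anti ?_ (sTerm_mem_gaussBall hh i)
  exact (Nat.cast_le.mpr (Finset.mem_Ico.mp hi).1).trans (le_card_pow i)

end Series

theorem statement8 (n : ℕ)
    (h : TS F) (hh : IsTate F h) (hnorm : gnorm F h < 1) :
    ∃ s : TS F, IsTate F s ∧ TT F (sPartial F n h) s ∧
      s - ((tt F - th F) ^ n)⁻¹ * twist F s = h := by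
  have hh1 : h ∈ gaussBall 1 := mem_gaussBall_one_of_gnorm_lt_one hnorm
  have hhT : h ∈ tateIntegers := ⟨hh, gaussBall_anti zero_le_one hh1⟩
  obtain ⟨s, hs⟩ := exists_sub_mem_gaussBall_of_cauchy fun _ _ hNM =>
    sPartial_sub_sPartial_mem_gaussBall (n := n) hh1 hNM
  refine ⟨s, isTate_of_forall_exists_sub_mem_gaussBall fun m =>
      ⟨_, (sPartial_mem_tateIntegers hhT m).1, hs m⟩,
    TT_iff.mpr fun m => (eventually_ge_atTop m).mono fun N hN =>
      gaussBall_anti (by exact_mod_cast hN) (hs N), ?_⟩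
  have hu : ((tt F - th F) ^ n)⁻¹ ∈ gaussBall 0 := by
    simpa [sDenom, th, tt] using (inv_sDenom_mem_tateIntegers (F := F) n 1).2
  refine sub_eq_zero.mp (eq_zero_of_forall_mem_gaussBall fun N => ?_)
  have hdiff : s - ((tt F - th F) ^ n)⁻¹ * twist F s - h = (s - sPartial F n h N)
      - ((tt F - th F) ^ n)⁻¹ * twist F (s - sPartial F n h N) - sTerm n h N := by
    rw [twist_sub]
    linear_combination sPartial_sub_inv_mul_twist n h N
  have htwist : twist F (s - sPartial F n h N) ∈ gaussBall N :=
    gaussBall_anti (le_mul_of_one_le_left (by positivity) (by exact_mod_cast Fintype.card_pos))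
      (twist_mem_gaussBall (hs N))
  rw [hdiff]
  refine sub_mem (sub_mem (hs N) (by simpa using mul_mem_gaussBall hu htwist)) ?_
  exact gaussBall_anti (le_card_pow N) (sTerm_mem_gaussBall hh1 N)

end Carlitz
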